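/- arXiv:1611.03979 — 6 statements merged into one kernel-verified Lean document; each statement's English description precedes it below -/
import Mathlib

section
/- Fix C ≥ 1. For every t > 0 such that F(Ct) ≥ j₀, one has F(t) ≤ 4 C^{1/ν*} F(Ct). -/
/-- `F μ t` is the number of indices `j ≥ 1` with `μ j ≥ t`. -/
noncomputable def F (μ : ℕ → ℝ) (t : ℝ) : ℕ :=
  {j : ℕ | 1 ≤ j ∧ t ≤ μ j}.ncard

/-!
Put `m = F(Ct)`, so that `μ_{m+1} < Ct`. Since `m + 1 ≥ j₀`, iterating (eigup) `k` times gives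
`μ_{2^k (m+1)} ≤ 2^{-kν*} μ_{m+1} < 2^{-kν*} C t`, which is at most `t` once `2^k ≥ C^{1/ν*}`.
Choosing `k` with `C^{1/ν*} ≤ 2^k ≤ 2 C^{1/ν*}`, we get
`F(t) < 2^k (m+1) ≤ 2 C^{1/ν*} · 2m`.
-/

section Counting

variable {μ : ℕ → ℝ}

lemma F_lt_of_apply_lt (hμ : AntitoneOn μ (Set.Ici 1)) {t : ℝ} {N : ℕ} (hN : 1 ≤ N)
    (hlt : μ N < t) : F μ t < N := by
  have hsub : {j : ℕ | 1 ≤ j ∧ t ≤ μ j} ⊆ ↑(Finset.Ico 1 N) := by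
    rintro j ⟨hj, htj⟩
    refine Finset.mem_coe.2 (Finset.mem_Ico.2 ⟨hj, ?_⟩)
    by_contra! hNj
    exact (hlt.trans_le htj).not_ge (hμ (Set.mem_Ici.2 hN) (Set.mem_Ici.2 hj) hNj)
  calc F μ t ≤ (Finset.Ico 1 N).card := by
        rw [← Set.ncard_coe_finset]; exact Set.ncard_le_ncard hsub (Finset.finite_toSet _)
    _ < N := by rw [Nat.card_Ico]; omega

lemma apply_F_add_one_lt (hμ : AntitoneOn μ (Set.Ici 1)) {s : ℝ} (hF : 0 < F μ s) :
    μ (F μ s + 1) < s := by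
  by_contra! hs
  have hsub : ↑(Finset.Icc 1 (F μ s + 1)) ⊆ {j : ℕ | 1 ≤ j ∧ s ≤ μ j} := by
    intro j hj
    obtain ⟨hj1, hjm⟩ := Finset.mem_Icc.1 (Finset.mem_coe.1 hj)
    exact ⟨hj1, hs.trans (hμ (Set.mem_Ici.2 hj1) (Set.mem_Ici.2 (by omega)) hjm)⟩
  have := Set.ncard_le_ncard hsub (Set.finite_of_ncard_pos hF)
  rw [Set.ncard_coe_finset, Nat.card_Icc] at this
  change _ ≤ F μ s at this
  omega

lemma apply_two_pow_mul_le {r : ℝ} (hr : 0 ≤ r) {j₀ : ℕ}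
    (hdouble : ∀ j, 1 ≤ j → j₀ ≤ j → μ (2 * j) ≤ r * μ j) {n : ℕ} (hn : 1 ≤ n) (hn₀ : j₀ ≤ n)
    (k : ℕ) : μ (2 ^ k * n) ≤ r ^ k * μ n := by
  induction k with
  | zero => simp
  | succ k ih =>
    have hkn : n ≤ 2 ^ k * n := Nat.le_mul_of_pos_left n (by positivity)
    calc μ (2 ^ (k + 1) * n) = μ (2 * (2 ^ k * n)) := by rw [pow_succ']; ring_nf
      _ ≤ r * μ (2 ^ k * n) := hdouble _ (hn.trans hkn) (hn₀.trans hkn)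
      _ ≤ r * (r ^ k * μ n) := mul_le_mul_of_nonneg_left ih hr
      _ = r ^ (k + 1) * μ n := by ring

end Counting

lemma exists_two_pow_between {C ν : ℝ} (hC : 1 ≤ C) (hν : 0 < ν) :
    ∃ k : ℕ, C ≤ ((2 : ℝ) ^ ν) ^ k ∧ (2 : ℝ) ^ k ≤ 2 * C ^ (1 / ν) := by
  obtain ⟨n, hn, hn'⟩ :=
    exists_nat_pow_near (x := C ^ (1 / ν)) (Real.one_le_rpow hC (by positivity)) one_lt_two
  refine ⟨n + 1, ?_, by rw [pow_succ']; linarith⟩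
  calc C = (C ^ (1 / ν)) ^ ν := by
        rw [← Real.rpow_mul (by linarith), one_div_mul_cancel hν.ne', Real.rpow_one]
    _ ≤ ((2 : ℝ) ^ (n + 1)) ^ ν := Real.rpow_le_rpow (by positivity) hn'.le hν.le
    _ = ((2 : ℝ) ^ ν) ^ (n + 1) := by
        rw [← Real.rpow_natCast, ← Real.rpow_natCast, ← Real.rpow_mul zero_le_two,
          ← Real.rpow_mul zero_le_two, mul_comm]

theorem stmt1_general (μ : ℕ → ℝ)
    (hanti : ∀ j, 1 ≤ j → μ (j + 1) ≤ μ j)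
    (ν : ℝ) (hν : 1 ≤ ν) (j₀ : ℕ) (hj₀ : 1 ≤ j₀)
    (heigup : ∀ j, 1 ≤ j → j₀ ≤ j → μ (2 * j) ≤ (2 : ℝ) ^ (-ν) * μ j)
    (C : ℝ) (hC : 1 ≤ C) (t : ℝ) (ht : 0 < t) (hF : j₀ ≤ F μ (C * t)) :
    (F μ t : ℝ) ≤ 4 * C ^ (1 / ν) * (F μ (C * t) : ℝ) := by
  have hμ : AntitoneOn μ (Set.Ici 1) := antitoneOn_nat_Ici_of_succ_le hanti
  set m := F μ (C * t)
  have hm : 1 ≤ m := hj₀.trans hF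
  obtain ⟨k, hCk, hk⟩ := exists_two_pow_between hC (by linarith : 0 < ν)
  have hsmall : μ (2 ^ k * (m + 1)) < t :=
    calc μ (2 ^ k * (m + 1)) ≤ ((2 : ℝ) ^ (-ν)) ^ k * μ (m + 1) :=
          apply_two_pow_mul_le (by positivity) heigup (by omega) (by omega) k
      _ < (((2 : ℝ) ^ ν) ^ k)⁻¹ * (C * t) := by
          rw [Real.rpow_neg zero_le_two, inv_pow]
          exact mul_lt_mul_of_pos_left (apply_F_add_one_lt hμ (by omega)) (by positivity)
      _ ≤ t := by
          rw [inv_mul_le_iff₀ (by positivity)]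
          exact mul_le_mul_of_nonneg_right hCk ht.le
  have hFt : (F μ t : ℝ) ≤ 2 ^ k * (m + 1) := by
    exact_mod_cast (F_lt_of_apply_lt hμ (Nat.one_le_iff_ne_zero.2 (by positivity)) hsmall).le
  have hm' : (m : ℝ) + 1 ≤ 2 * m := by
    have : (1 : ℝ) ≤ m := by exact_mod_cast hm
    linarith
  calc (F μ t : ℝ) ≤ 2 ^ k * (m + 1) := hFt
    _ ≤ (2 * C ^ (1 / ν)) * (2 * m) := mul_le_mul hk hm' (by positivity) (by positivity)
    _ = 4 * C ^ (1 / ν) * m := by ring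

/-- under (eigup), for `C ≥ 1` and every `t > 0` with `F(Ct) ≥ j₀`,
one has `F(t) ≤ 4 C^(1/ν*) F(Ct)`. -/
theorem stmt1 (μ : ℕ → ℝ)
    (hpos : ∀ j, 1 ≤ j → 0 < μ j)
    (hanti : ∀ j, 1 ≤ j → μ (j + 1) ≤ μ j)
    (hlim : Filter.Tendsto μ Filter.atTop (nhds 0))
    (ν : ℝ) (hν : 1 ≤ ν) (j₀ : ℕ) (hj₀ : 1 ≤ j₀)
    (heigup : ∀ j, 1 ≤ j → j₀ ≤ j → μ (2 * j) ≤ (2 : ℝ) ^ (-ν) * μ j)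
    (C : ℝ) (hC : 1 ≤ C) (t : ℝ) (ht : 0 < t) (hF : j₀ ≤ F μ (C * t)) :
    (F μ t : ℝ) ≤ 4 * C ^ (1 / ν) * (F μ (C * t) : ℝ) :=
  stmt1_general μ hanti ν hν j₀ hj₀ heigup C hC t ht hF
end

section
/- Fix r > 0 and C ≥ 1. For every t > 0 such that F(Ct) ≥ j₀ (in particular F(t) ≥ 1), one has G(Ct) ≤ 4 C^{2r+1+1/ν*} G(t). -/
/-- `G μ r t = t^(2r+1) / F(t)`. -/
noncomputable def G (μ : ℕ → ℝ) (r t : ℝ) : ℝ :=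
  t ^ (2 * r + 1) / (F μ t : ℝ)

lemma mu_mono (μ : ℕ → ℝ) (hanti : ∀ j, 1 ≤ j → μ (j + 1) ≤ μ j) :
    ∀ a b, 1 ≤ a → a ≤ b → μ b ≤ μ a := by
  intro a b ha hab
  induction b, hab using Nat.le_induction with
  | base => exact le_rfl
  | succ n hn ih => exact le_trans (hanti n (le_trans ha hn)) ih

lemma F_spec (μ : ℕ → ℝ) (hanti : ∀ j, 1 ≤ j → μ (j + 1) ≤ μ j)
    (hlim : Filter.Tendsto μ Filter.atTop (nhds 0)) (s : ℝ) (hs : 0 < s) :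
    μ (F μ s + 1) < s ∧ ∀ j, 1 ≤ j → (s ≤ μ j ↔ j ≤ F μ s) := by
  classical
  have hex : ∃ j, 1 ≤ j ∧ μ j < s := by
    have h1 : ∀ᶠ j in Filter.atTop, μ j < s := hlim.eventually (gt_mem_nhds hs)
    have h2 : ∀ᶠ j in Filter.atTop, 1 ≤ j := Filter.eventually_ge_atTop 1
    exact (h2.and h1).exists
  set m := Nat.find hex with hmdef
  obtain ⟨hm1, hms⟩ := Nat.find_spec hex
  have hmem : ∀ j, (1 ≤ j ∧ s ≤ μ j) ↔ (1 ≤ j ∧ j < m) := by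
    intro j
    constructor
    · rintro ⟨hj1, hjs⟩
      refine ⟨hj1, ?_⟩
      by_contra h
      push_neg at h
      exact absurd hjs (not_le.mpr (lt_of_le_of_lt (mu_mono μ hanti m j hm1 h) hms))
    · rintro ⟨hj1, hjm⟩
      exact ⟨hj1, not_lt.mp (fun hc => (Nat.find_min hex hjm) ⟨hj1, hc⟩)⟩
  have hset : {j : ℕ | 1 ≤ j ∧ s ≤ μ j} = Set.Ico 1 m := by
    ext j
    simp only [Set.mem_setOf_eq, Set.mem_Ico]
    exact hmem j
  have hFeq : F μ s = m - 1 := by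
    rw [F, hset, show Set.Ico 1 m = ↑(Finset.Ico 1 m) from (Finset.coe_Ico 1 m).symm,
      Set.ncard_coe_finset, Nat.card_Ico]
  have hF1 : F μ s + 1 = m := by omega
  refine ⟨by rw [hF1]; exact hms, fun j hj => ?_⟩
  constructor
  · intro hjs
    have := (hmem j).mp ⟨hj, hjs⟩
    omega
  · intro hjF
    exact ((hmem j).mpr ⟨hj, by omega⟩).2

/-- under (eigup), for `r > 0`, `C ≥ 1` and every `t > 0` with
`F(Ct) ≥ j₀` (in particular `F(t) ≥ 1`), one has `G(Ct) ≤ 4 C^(2r+1+1/ν*) G(t)`. -/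
theorem stmt2 (μ : ℕ → ℝ)
    (hpos : ∀ j, 1 ≤ j → 0 < μ j)
    (hanti : ∀ j, 1 ≤ j → μ (j + 1) ≤ μ j)
    (hlim : Filter.Tendsto μ Filter.atTop (nhds 0))
    (ν : ℝ) (hν : 1 ≤ ν) (j₀ : ℕ) (hj₀ : 1 ≤ j₀)
    (heigup : ∀ j, 1 ≤ j → j₀ ≤ j → μ (2 * j) ≤ (2 : ℝ) ^ (-ν) * μ j)
    (r : ℝ) (hr : 0 < r)
    (C : ℝ) (hC : 1 ≤ C) (t : ℝ) (ht : 0 < t) (hF : j₀ ≤ F μ (C * t)) :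
    G μ r (C * t) ≤ 4 * C ^ (2 * r + 1 + 1 / ν) * G μ r t := by
  classical
  have hC0 : (0 : ℝ) < C := lt_of_lt_of_le one_pos hC
  have hν0 : (0 : ℝ) < ν := lt_of_lt_of_le one_pos hν
  have hCt0 : (0 : ℝ) < C * t := by positivity
  obtain ⟨hCt1, hCt2⟩ := F_spec μ hanti hlim (C * t) hCt0
  obtain ⟨ht1, ht2⟩ := F_spec μ hanti hlim t ht
  set m := F μ (C * t) with hmdef
  set n := F μ t with hndef
  have hm1 : 1 ≤ m := le_trans hj₀ hF
  have hmn : m ≤ n :=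
    (ht2 m hm1).mp (le_trans (le_mul_of_one_le_left ht.le hC) ((hCt2 m hm1).mpr le_rfl))
  have hn1 : 1 ≤ n := le_trans hm1 hmn
  -- iterate eigup
  have hiter : ∀ k : ℕ, μ (2 ^ k * (m + 1)) ≤ ((2 : ℝ) ^ (-ν)) ^ k * μ (m + 1) := by
    intro k
    induction k with
    | zero => simp
    | succ k ih =>
      have hbase : (1 : ℕ) ≤ 2 ^ k * (m + 1) := Nat.mul_pos (Nat.two_pow_pos k) (Nat.succ_pos m)
      have hj0' : j₀ ≤ 2 ^ k * (m + 1) := by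
        have h2k : 1 ≤ 2 ^ k := Nat.one_le_two_pow
        calc j₀ ≤ m := hF
          _ ≤ m + 1 := Nat.le_succ m
          _ ≤ 2 ^ k * (m + 1) := Nat.le_mul_of_pos_left _ (by omega)
      have harg : 2 ^ (k + 1) * (m + 1) = 2 * (2 ^ k * (m + 1)) := by ring
      calc μ (2 ^ (k + 1) * (m + 1)) = μ (2 * (2 ^ k * (m + 1))) := by rw [harg]
        _ ≤ (2 : ℝ) ^ (-ν) * μ (2 ^ k * (m + 1)) := heigup _ hbase hj0'
        _ ≤ (2 : ℝ) ^ (-ν) * (((2 : ℝ) ^ (-ν)) ^ k * μ (m + 1)) := by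
            have h2ν : (0 : ℝ) < (2 : ℝ) ^ (-ν) := Real.rpow_pos_of_pos two_pos _
            exact mul_le_mul_of_nonneg_left ih h2ν.le
        _ = ((2 : ℝ) ^ (-ν)) ^ (k + 1) * μ (m + 1) := by ring
  set k := ⌈Real.logb 2 C / ν⌉₊ with hkdef
  have hlogb : 0 ≤ Real.logb 2 C := Real.logb_nonneg one_lt_two hC
  have hx0 : 0 ≤ Real.logb 2 C / ν := by positivity
  have hk_ge : Real.logb 2 C / ν ≤ (k : ℝ) := Nat.le_ceil _
  have hk_lt : (k : ℝ) < Real.logb 2 C / ν + 1 := Nat.ceil_lt_add_one hx0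
  have hexp : Real.logb 2 C ≤ ν * k := by
    rw [div_le_iff₀ hν0] at hk_ge
    linarith [hk_ge]
  have h2logb : (2 : ℝ) ^ Real.logb 2 C = C := Real.rpow_logb two_pos (by norm_num) hC0
  have hpowk : ((2 : ℝ) ^ (-ν)) ^ k = (2 : ℝ) ^ (-(ν * k)) := by
    rw [← Real.rpow_natCast ((2 : ℝ) ^ (-ν)) k, ← Real.rpow_mul (by norm_num : (0:ℝ) ≤ 2)]
    ring_nf
  have hC_le : C ≤ (2 : ℝ) ^ (ν * k) := by
    rw [← h2logb]
    exact Real.rpow_le_rpow_left_iff one_lt_two |>.mpr hexp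
  have hsmall : ((2 : ℝ) ^ (-ν)) ^ k * C ≤ 1 := by
    rw [hpowk]
    calc (2 : ℝ) ^ (-(ν * k)) * C ≤ (2 : ℝ) ^ (-(ν * k)) * (2 : ℝ) ^ (ν * k) := by
          exact mul_le_mul_of_nonneg_left hC_le (Real.rpow_pos_of_pos two_pos _).le
      _ = 1 := by rw [← Real.rpow_add two_pos]; simp
  have h2ν_pos : (0 : ℝ) < ((2 : ℝ) ^ (-ν)) ^ k := pow_pos (Real.rpow_pos_of_pos two_pos _) k
  -- μ at index 2^k (m+1) is below t
  have hmu_small : μ (2 ^ k * (m + 1)) < t := by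
    calc μ (2 ^ k * (m + 1)) ≤ ((2 : ℝ) ^ (-ν)) ^ k * μ (m + 1) := hiter k
      _ < ((2 : ℝ) ^ (-ν)) ^ k * (C * t) := by
          exact mul_lt_mul_of_pos_left hCt1 h2ν_pos
      _ = (((2 : ℝ) ^ (-ν)) ^ k * C) * t := by ring
      _ ≤ 1 * t := mul_le_mul_of_nonneg_right hsmall ht.le
      _ = t := one_mul t
  have hn_lt : n < 2 ^ k * (m + 1) := by
    by_contra h
    push_neg at h
    have h1 : (1 : ℕ) ≤ 2 ^ k * (m + 1) := Nat.mul_pos (Nat.two_pow_pos k) (Nat.succ_pos m)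
    have := (ht2 _ h1).mpr h
    linarith
  -- bound 2^k ≤ 2 * C^(1/ν)
  have h2k_bound : ((2 : ℝ) ^ k : ℝ) ≤ 2 * C ^ (1 / ν) := by
    have e1 : ((2 : ℝ) ^ k : ℝ) = (2 : ℝ) ^ ((k : ℝ)) := (Real.rpow_natCast 2 k).symm
    have e2 : (2 : ℝ) ^ ((k : ℝ)) ≤ (2 : ℝ) ^ (Real.logb 2 C / ν + 1) :=
      Real.rpow_le_rpow_of_exponent_le one_le_two hk_lt.le
    have e3 : (2 : ℝ) ^ (Real.logb 2 C / ν + 1) = (2 : ℝ) ^ (Real.logb 2 C / ν) * 2 := by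
      rw [Real.rpow_add two_pos]; simp
    have e4 : (2 : ℝ) ^ (Real.logb 2 C / ν) = C ^ (1 / ν) := by
      rw [div_eq_mul_one_div, Real.rpow_mul (by norm_num : (0:ℝ) ≤ 2), h2logb]
    rw [e1]
    calc (2 : ℝ) ^ ((k : ℝ)) ≤ (2 : ℝ) ^ (Real.logb 2 C / ν + 1) := e2
      _ = C ^ (1 / ν) * 2 := by rw [e3, e4]
      _ = 2 * C ^ (1 / ν) := by ring
  have hC1ν_pos : (0 : ℝ) < C ^ (1 / ν) := Real.rpow_pos_of_pos hC0 _
  -- main counting bound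
  have hn4 : (n : ℝ) ≤ 4 * C ^ (1 / ν) * m := by
    have hcast : (n : ℝ) < (2 : ℝ) ^ k * ((m : ℝ) + 1) := by
      have := hn_lt
      exact_mod_cast this
    have hmm : (m : ℝ) + 1 ≤ 2 * m := by
      have : (1 : ℝ) ≤ m := by exact_mod_cast hm1
      linarith
    have h2kpos : (0 : ℝ) < (2 : ℝ) ^ k := by positivity
    calc (n : ℝ) ≤ (2 : ℝ) ^ k * ((m : ℝ) + 1) := hcast.le
      _ ≤ (2 : ℝ) ^ k * (2 * m) := mul_le_mul_of_nonneg_left hmm h2kpos.le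
      _ ≤ (2 * C ^ (1 / ν)) * (2 * m) := by
          have hm0 : (0 : ℝ) ≤ 2 * m := by positivity
          exact mul_le_mul_of_nonneg_right h2k_bound hm0
      _ = 4 * C ^ (1 / ν) * m := by ring
  -- final arithmetic
  have hmR : (0 : ℝ) < (m : ℝ) := by exact_mod_cast hm1
  have hnR : (0 : ℝ) < (n : ℝ) := by exact_mod_cast hn1
  have hP : (0 : ℝ) < C ^ (2 * r + 1) * t ^ (2 * r + 1) := by positivity
  have h1 : G μ r (C * t) = C ^ (2 * r + 1) * t ^ (2 * r + 1) / m := by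
    rw [G, Real.mul_rpow hC0.le ht.le]
  have h2 : 4 * C ^ (2 * r + 1 + 1 / ν) * G μ r t
      = (4 * C ^ (2 * r + 1) * C ^ (1 / ν) * t ^ (2 * r + 1)) / n := by
    rw [G, Real.rpow_add hC0]; ring
  rw [h1, h2, div_le_div_iff₀ hmR hnR]
  nlinarith [mul_le_mul_of_nonneg_left hn4 hP.le]
end

section
/- There exists u₀ > 0 such that for every u with 0 < u ≤ u₀, one has G(G⁻¹(u)) ≥ u/4. -/
/-- The generalized inverse `G⁻¹(u) = max {t > 0 : G(t) ≤ u}` (where the set only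
contains points with `F(t) ≥ 1`, i.e. `G(t) < ∞`). -/
noncomputable def Ginv (μ : ℕ → ℝ) (r u : ℝ) : ℝ :=
  sSup {t : ℝ | 0 < t ∧ 1 ≤ F μ t ∧ G μ r t ≤ u}

open Filter Set Topology

variable {μ : ℕ → ℝ} {r t s u T : ℝ}

theorem finite_setOf_le_apply (hlim : Tendsto μ atTop (𝓝 0)) (ht : 0 < t) :
    {j : ℕ | 1 ≤ j ∧ t ≤ μ j}.Finite := by
  obtain ⟨N, hN⟩ := eventually_atTop.mp (hlim.eventually_lt_const ht)
  exact (finite_Iio N).subset fun j hj => not_le.1 fun hNj => (hN j hNj).not_ge hj.2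

theorem le_F_iff (hμ : AntitoneOn μ (Ici 1)) (hlim : Tendsto μ atTop (𝓝 0)) (ht : 0 < t)
    {n : ℕ} (hn : 1 ≤ n) : n ≤ F μ t ↔ t ≤ μ n := by
  constructor
  · intro h
    by_contra! hlt
    have hsub : {j : ℕ | 1 ≤ j ∧ t ≤ μ j} ⊆ Ico 1 n := fun j ⟨hj, htj⟩ =>
      ⟨hj, not_le.1 fun hnj => (htj.trans (hμ hn hj hnj)).not_gt hlt⟩
    have := ncard_le_ncard hsub (finite_Ico 1 n)
    simp only [F, ncard_Ico_nat] at h this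
    omega
  · intro h
    have hsub : Icc 1 n ⊆ {j : ℕ | 1 ≤ j ∧ t ≤ μ j} := fun j hj =>
      ⟨hj.1, h.trans (hμ hj.1 hn hj.2)⟩
    simpa [F] using ncard_le_ncard hsub (finite_setOf_le_apply hlim ht)

theorem F_anti (hlim : Tendsto μ atTop (𝓝 0)) (hs : 0 < s) (hst : s ≤ t) : F μ t ≤ F μ s :=
  ncard_le_ncard (fun _ hj => ⟨hj.1, hst.trans hj.2⟩) (finite_setOf_le_apply hlim hs)

theorem G_lt_G (hp : 0 < 2 * r + 1) (hlim : Tendsto μ atTop (𝓝 0)) (hs : 0 < s) (hst : s < t)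
    (ht : 1 ≤ F μ t) : G μ r s < G μ r t := by
  have hFt : (0 : ℝ) < F μ t := by exact_mod_cast ht
  calc G μ r s ≤ s ^ (2 * r + 1) / F μ t :=
        div_le_div_of_nonneg_left (by positivity) hFt (by exact_mod_cast F_anti hlim hs hst.le)
    _ < t ^ (2 * r + 1) / F μ t := by gcongr

theorem nonempty_setOf_G_le (hμ : AntitoneOn μ (Ici 1)) (hlim : Tendsto μ atTop (𝓝 0))
    (hμ₁ : 0 < μ 1) (hp : 0 < 2 * r + 1) (hu : 0 < u) :
    {t | 0 < t ∧ 1 ≤ F μ t ∧ G μ r t ≤ u}.Nonempty := by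
  set t := min (μ 1) (u ^ (2 * r + 1)⁻¹)
  have ht : 0 < t := lt_min hμ₁ (by positivity)
  have hF : 1 ≤ F μ t := (le_F_iff hμ hlim ht le_rfl).2 (min_le_left _ _)
  refine ⟨t, ht, hF, ?_⟩
  calc G μ r t ≤ t ^ (2 * r + 1) := div_le_self (by positivity) (by exact_mod_cast hF)
    _ ≤ (u ^ (2 * r + 1)⁻¹) ^ (2 * r + 1) := by gcongr; exact min_le_right _ _
    _ = u := Real.rpow_inv_rpow hu.le hp.ne'

theorem mem_upperBounds_setOf_G_le (hp : 0 < 2 * r + 1) (hlim : Tendsto μ atTop (𝓝 0))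
    (ht : 0 < t) (hut : u ≤ G μ r t) :
    t ∈ upperBounds {s | 0 < s ∧ 1 ≤ F μ s ∧ G μ r s ≤ u} :=
  fun _ ⟨_, hF, hG⟩ => not_lt.1 fun h => (G_lt_G hp hlim ht h hF).not_ge (hG.trans hut)

theorem lt_G_of_Ginv_lt (hbdd : BddAbove {t | 0 < t ∧ 1 ≤ F μ t ∧ G μ r t ≤ u})
    (hs : Ginv μ r u < s) (hs₀ : 0 < s) (hF : 1 ≤ F μ s) : u < G μ r s :=
  not_le.1 fun h => (le_csSup hbdd ⟨hs₀, hF, h⟩).not_gt hs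

theorem lt_apply_div_two {c : ℝ} {j₀ k : ℕ} (hμ : AntitoneOn μ (Ici 1)) (hc : c < 1)
    (hdecay : ∀ j, 1 ≤ j → j₀ ≤ j → μ (2 * j) ≤ c * μ j) (hT : 0 < T)
    (hk₀ : 2 * j₀ ≤ k) (hk : 2 ≤ k) (hTk : T ≤ μ k) : T < μ (k / 2) := by
  have hm : 1 ≤ k / 2 := by omega
  have hT2m : T ≤ μ (2 * (k / 2)) := hTk.trans (hμ (by simp; omega) (by simp; omega) (by omega))
  have hμm : 0 < μ (k / 2) := (hT.trans_le hT2m).trans_le (hμ hm (by simp; omega) (by omega))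
  calc T ≤ μ (2 * (k / 2)) := hT2m
    _ ≤ c * μ (k / 2) := hdecay _ hm (by omega)
    _ < μ (k / 2) := mul_lt_of_lt_one_left hμm hc

theorem le_rpow_div_of_forall_lt_G (hμ : AntitoneOn μ (Ici 1)) (hlim : Tendsto μ atTop (𝓝 0))
    {m : ℕ} (hT : 0 < T) (hm : 1 ≤ m) (hTm : T < μ m)
    (hu : ∀ s, T < s → s ≤ μ m → u < G μ r s) : u ≤ T ^ (2 * r + 1) / m := by
  have hlim_s : Tendsto (fun s : ℝ => s ^ (2 * r + 1) / m) (𝓝[>] T) (𝓝 (T ^ (2 * r + 1) / m)) :=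
    ((Real.continuousAt_rpow_const T _ (Or.inl hT.ne')).div_const _).tendsto.mono_left
      nhdsWithin_le_nhds
  refine ge_of_tendsto hlim_s (eventually_of_mem (Ioc_mem_nhdsGT hTm) fun s ⟨hTs, hsm⟩ => ?_)
  have hs : 0 < s := hT.trans hTs
  calc u ≤ G μ r s := (hu s hTs hsm).le
    _ ≤ s ^ (2 * r + 1) / m := div_le_div_of_nonneg_left (by positivity)
        (by exact_mod_cast hm) (by exact_mod_cast (le_F_iff hμ hlim hs hm).2 hsm)

theorem stmt5_general (μ : ℕ → ℝ)
    (hpos : ∀ j, 1 ≤ j → 0 < μ j)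
    (hanti : ∀ j, 1 ≤ j → μ (j + 1) ≤ μ j)
    (hlim : Filter.Tendsto μ Filter.atTop (nhds 0))
    (ν : ℝ) (hν : 1 ≤ ν) (j₀ : ℕ)
    (heigup : ∀ j, 1 ≤ j → j₀ ≤ j → μ (2 * j) ≤ (2 : ℝ) ^ (-ν) * μ j)
    (r : ℝ) (hr : 0 < r) :
    ∃ u₀ > 0, ∀ u : ℝ, 0 < u → u ≤ u₀ → u / 4 ≤ G μ r (Ginv μ r u) := by
  have hμ : AntitoneOn μ (Ici 1) := antitoneOn_of_succ_le ordConnected_Ici fun j _ hj _ => hanti j hj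
  have hp : 0 < 2 * r + 1 := by linarith
  have hc : (2 : ℝ) ^ (-ν) < 1 := Real.rpow_lt_one_of_one_lt_of_neg one_lt_two (by linarith)
  set n := 2 * (j₀ + 1)
  have hμn : 0 < μ n := hpos n (by omega)
  have hn : n ≤ F μ (μ n) := (le_F_iff hμ hlim hμn (by omega)).2 le_rfl
  refine ⟨G μ r (μ n), div_pos (by positivity) (by exact_mod_cast (by omega : 0 < F μ (μ n))),
    fun u hu hun => ?_⟩
  have hne := nonempty_setOf_G_le hμ hlim (hpos 1 le_rfl) hp hu
  have hub := mem_upperBounds_setOf_G_le hp hlim hμn hun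
  set T := Ginv μ r u
  have hT : 0 < T := hne.some_mem.1.trans_le (le_csSup ⟨_, hub⟩ hne.some_mem)
  set k := F μ T
  have hnk : n ≤ k := hn.trans (F_anti hlim hT (csSup_le hne hub))
  have hTm := lt_apply_div_two hμ hc heigup hT (by omega) (by omega)
    ((le_F_iff hμ hlim hT (by omega)).1 le_rfl)
  have hum : u ≤ T ^ (2 * r + 1) / (k / 2 : ℕ) :=
    le_rpow_div_of_forall_lt_G hμ hlim hT (by omega) hTm fun s hTs hsm =>
      lt_G_of_Ginv_lt ⟨_, hub⟩ hTs (hT.trans hTs)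
        (le_trans (by omega) ((le_F_iff hμ hlim (hT.trans hTs) (by omega)).2 hsm))
  have hk3 : (k : ℝ) ≤ 3 * (k / 2 : ℕ) := by exact_mod_cast (by omega : k ≤ 3 * (k / 2))
  rw [le_div_iff₀ (by exact_mod_cast (by omega : 0 < k / 2))] at hum
  rw [G, le_div_iff₀ (by exact_mod_cast (by omega : 0 < k))]
  nlinarith

/-- under (eigup), there is `u₀ > 0` such that for every
`0 < u ≤ u₀` one has `G(G⁻¹(u)) ≥ u / 4`. -/
theorem stmt5 (μ : ℕ → ℝ)
    (hpos : ∀ j, 1 ≤ j → 0 < μ j)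
    (hanti : ∀ j, 1 ≤ j → μ (j + 1) ≤ μ j)
    (hlim : Filter.Tendsto μ Filter.atTop (nhds 0))
    (ν : ℝ) (hν : 1 ≤ ν) (j₀ : ℕ) (hj₀ : 1 ≤ j₀)
    (heigup : ∀ j, 1 ≤ j → j₀ ≤ j → μ (2 * j) ≤ (2 : ℝ) ^ (-ν) * μ j)
    (r : ℝ) (hr : 0 < r) :
    ∃ u₀ > 0, ∀ u : ℝ, 0 < u → u ≤ u₀ → u / 4 ≤ G μ r (Ginv μ r u) :=
  stmt5_general μ hpos hanti hlim ν hν j₀ heigup r hr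
end

section
/- Define F⁺(t) := #{j ≥ 1 : μ_j > t} for t > 0. Then for every t with 0 < t < μ₁ and F(t) ≥ 2 j₀, one has F(t) ≤ 4 F⁺(t). -/
/-- `F⁺ μ t` is the number of indices `j ≥ 1` with `μ j > t`. -/
noncomputable def Fplus (μ : ℕ → ℝ) (t : ℝ) : ℕ :=
  {j : ℕ | 1 ≤ j ∧ t < μ j}.ncard

/-- under (eigup), for every `0 < t < μ₁` with `F(t) ≥ 2 j₀`, one has
`F(t) ≤ 4 F⁺(t)`. -/
theorem stmt6 (μ : ℕ → ℝ)
    (hpos : ∀ j, 1 ≤ j → 0 < μ j)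
    (hanti : ∀ j, 1 ≤ j → μ (j + 1) ≤ μ j)
    (hlim : Filter.Tendsto μ Filter.atTop (nhds 0))
    (ν : ℝ) (hν : 1 ≤ ν) (j₀ : ℕ) (hj₀ : 1 ≤ j₀)
    (heigup : ∀ j, 1 ≤ j → j₀ ≤ j → μ (2 * j) ≤ (2 : ℝ) ^ (-ν) * μ j)
    (t : ℝ) (ht0 : 0 < t) (ht1 : t < μ 1) (hF : 2 * j₀ ≤ F μ t) :
    F μ t ≤ 4 * Fplus μ t := by
  -- μ is antitone on [1, ∞)
  have hmono : ∀ i j : ℕ, 1 ≤ i → i ≤ j → μ j ≤ μ i := by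
    intro i j hi hij
    induction j, hij using Nat.le_induction with
    | base => exact le_refl _
    | succ n hn ih => exact le_trans (hanti n (le_trans hi hn)) ih
  -- the set S is finite
  have hev : ∀ᶠ n in Filter.atTop, μ n < t := hlim.eventually_lt_const ht0
  obtain ⟨N, hN⟩ := Filter.eventually_atTop.mp hev
  have hfinS : {j : ℕ | 1 ≤ j ∧ t ≤ μ j}.Finite := by
    apply (Set.finite_Iio N).subset
    intro x ⟨hx1, hx2⟩
    by_contra h
    exact absurd (hN x (le_of_not_gt (fun hx => h (Set.mem_Iio.mpr hx)))) (not_lt.mpr hx2)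
  set S : Set ℕ := {j : ℕ | 1 ≤ j ∧ t ≤ μ j} with hS
  have h1S : 1 ∈ S := ⟨le_refl 1, ht1.le⟩
  set s : Finset ℕ := hfinS.toFinset with hs
  have hmem : ∀ i, i ∈ s ↔ (1 ≤ i ∧ t ≤ μ i) := by
    intro i; rw [hs, Set.Finite.mem_toFinset]; rfl
  have hsne : s.Nonempty := ⟨1, (hmem 1).mpr h1S⟩
  set M : ℕ := s.max' hsne with hM
  have hMmem : M ∈ s := s.max'_mem hsne
  have hM1 : 1 ≤ M := ((hmem M).mp hMmem).1
  have htM : ∀ i, 1 ≤ i → i ≤ M → t ≤ μ i := fun i hi hiM =>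
    le_trans ((hmem M).mp hMmem).2 (hmono i M hi hiM)
  have hsIcc : s = Finset.Icc 1 M := by
    ext i
    rw [hmem, Finset.mem_Icc]
    constructor
    · rintro ⟨h1, h2⟩
      exact ⟨h1, s.le_max' i ((hmem i).mpr ⟨h1, h2⟩)⟩
    · rintro ⟨h1, h2⟩
      exact ⟨h1, htM i h1 h2⟩
  have hFM : F μ t = M := by
    unfold F
    rw [← hS, ← hfinS.coe_toFinset, Set.ncard_coe_finset, ← hs, hsIcc, Nat.card_Icc]
    omega
  rw [hFM] at hF ⊢
  -- choose j
  set j : ℕ := max j₀ ((M + 3) / 4) with hj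
  have hj1 : 1 ≤ j := le_trans hj₀ (le_max_left _ _)
  have h2j : 2 * j ≤ M := by
    have : 2 * ((M + 3) / 4) ≤ M := by omega
    omega
  have hμ2j : t ≤ μ (2 * j) := htM _ (by omega) h2j
  have heig := heigup j hj1 (le_max_left _ _)
  have hp : (0 : ℝ) < (2 : ℝ) ^ ν := Real.rpow_pos_of_pos (by norm_num) ν
  have hpow : (2 : ℝ) ≤ (2 : ℝ) ^ ν := by
    calc (2 : ℝ) = (2 : ℝ) ^ (1 : ℝ) := (Real.rpow_one 2).symm
    _ ≤ (2 : ℝ) ^ ν := Real.rpow_le_rpow_of_exponent_le (by norm_num) hν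
  have hμj : t < μ j := by
    rw [Real.rpow_neg (by norm_num) ν] at heig
    have h1 : (2 : ℝ) ^ ν * t ≤ μ j := by
      have := mul_le_mul_of_nonneg_left (le_trans hμ2j heig) hp.le
      rwa [← mul_assoc, mul_inv_cancel₀ hp.ne', one_mul] at this
    nlinarith [mul_le_mul_of_nonneg_right hpow ht0.le]
  -- lower bound on Fplus
  have hfinP : {i : ℕ | 1 ≤ i ∧ t < μ i}.Finite :=
    hfinS.subset (fun x ⟨h1, h2⟩ => ⟨h1, h2.le⟩)
  have hsub : (Set.Icc 1 j) ⊆ {i : ℕ | 1 ≤ i ∧ t < μ i} := by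
    rintro i ⟨h1, h2⟩
    exact ⟨h1, lt_of_lt_of_le hμj (hmono i j h1 h2)⟩
  have hjF : j ≤ Fplus μ t := by
    have h := Set.ncard_le_ncard hsub hfinP
    rwa [← Finset.coe_Icc, Set.ncard_coe_finset, Nat.card_Icc, Nat.add_sub_cancel] at h
    
  have : M ≤ 4 * j := by
    have : (M + 3) / 4 ≤ j := le_max_right _ _
    omega
  omega
end

section
/- For every k ≥ j₀, the tail sum satisfies Σ_{j=k+1}^{∞} μ_j ≤ (k+1) μ_{k+1} (1 − 2^{1−ν*})^{−1}. -/
/-!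
Group the tail `∑_{j > k} μ_j` into the dyadic blocks `[2^m (k+1), 2^(m+1) (k+1))`. By
monotonicity each block is at most `2^m (k+1) μ_{2^m (k+1)}`, and iterating (eigup) gives
`μ_{2^m (k+1)} ≤ 2^(-ν m) μ_{k+1}`, so the blocks are dominated by the geometric series
`(k+1) μ_{k+1} ∑_m (2^(1-ν))^m`.
-/

open Finset

lemma apply_two_pow_mul_le_pow_mul {f : ℕ → ℝ} {q : ℝ} {n : ℕ} (hq : 0 ≤ q)
    (hdec : ∀ j, n ≤ j → f (2 * j) ≤ q * f j) (m : ℕ) : f (2 ^ m * n) ≤ q ^ m * f n := by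
  induction m with
  | zero => simp
  | succ m ih =>
    calc f (2 ^ (m + 1) * n) = f (2 * (2 ^ m * n)) := by ring_nf
      _ ≤ q * f (2 ^ m * n) := hdec _ (Nat.le_mul_of_pos_left n (Nat.two_pow_pos m))
      _ ≤ q * (q ^ m * f n) := by gcongr
      _ = q ^ (m + 1) * f n := by ring

section DyadicDecay

variable {f : ℕ → ℝ} {q : ℝ} {n : ℕ}

lemma sum_range_add_le_of_dyadic_decay (hn : 0 < n) (hf : AntitoneOn f (Set.Ici 1))
    (hf0 : ∀ j, n ≤ j → 0 ≤ f j) (hq : 0 ≤ q) (hq1 : 2 * q < 1)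
    (hdec : ∀ j, n ≤ j → f (2 * j) ≤ q * f j) (N : ℕ) :
    ∑ i ∈ range N, f (n + i) ≤ n * f n * (1 - 2 * q)⁻¹ := by
  have hantitone : ∀ ⦃a b⦄, 0 < a → a ≤ b → f b ≤ f a :=
    fun a b ha hab => hf (Set.mem_Ici.2 ha) (Set.mem_Ici.2 (ha.trans_le hab)) hab
  have hblocks := le_sum_schlomilch' hantitone (u := fun m => 2 ^ m * n)
    (fun m => Nat.mul_pos (Nat.two_pow_pos m) hn)
    (fun a b hab => Nat.mul_le_mul_right n (Nat.pow_le_pow_right two_pos hab)) N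
  simp only [pow_zero, one_mul] at hblocks
  have hfn : 0 ≤ f n := hf0 n le_rfl
  have hsub : Ico n (n + N) ⊆ Ico n (2 ^ N * n) :=
    Ico_subset_Ico_right (by nlinarith [N.lt_two_pow_self])
  calc ∑ i ∈ range N, f (n + i)
      = ∑ j ∈ Ico n (n + N), f j := by rw [sum_Ico_eq_sum_range, Nat.add_sub_cancel_left]
    _ ≤ ∑ j ∈ Ico n (2 ^ N * n), f j :=
        sum_le_sum_of_subset_of_nonneg hsub fun j hj _ => hf0 j (mem_Ico.1 hj).1
    _ ≤ ∑ m ∈ range N, (2 ^ (m + 1) * n - 2 ^ m * n) • f (2 ^ m * n) := hblocks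
    _ ≤ ∑ m ∈ range N, n * f n * (2 * q) ^ m := by
        gcongr with m
        rw [nsmul_eq_mul, Nat.sub_eq_of_eq_add (c := 2 ^ m * n) (by ring)]
        calc ((2 ^ m * n : ℕ) : ℝ) * f (2 ^ m * n) ≤ (2 ^ m * n : ℕ) * (q ^ m * f n) := by
              gcongr
              exact apply_two_pow_mul_le_pow_mul hq hdec m
          _ = n * f n * (2 * q) ^ m := by push_cast; ring
    _ = n * f n * ∑ m ∈ Ico 0 N, (2 * q) ^ m := by rw [← mul_sum, range_eq_Ico]
    _ ≤ n * f n * (1 - 2 * q)⁻¹ := by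
        gcongr
        simpa using geom_sum_Ico_le_of_lt_one (m := 0) (n := N) (by positivity) hq1

theorem summable_tail_and_tsum_tail_le_of_dyadic_decay (hn : 0 < n)
    (hf : AntitoneOn f (Set.Ici 1)) (hf0 : ∀ j, n ≤ j → 0 ≤ f j) (hq : 0 ≤ q) (hq1 : 2 * q < 1)
    (hdec : ∀ j, n ≤ j → f (2 * j) ≤ q * f j) :
    Summable (fun i => f (n + i)) ∧ ∑' i, f (n + i) ≤ n * f n * (1 - 2 * q)⁻¹ := by
  have hnonneg : ∀ i, 0 ≤ f (n + i) := fun i => hf0 _ (Nat.le_add_right n i)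
  have hpartial := sum_range_add_le_of_dyadic_decay hn hf hf0 hq hq1 hdec
  exact ⟨summable_of_sum_range_le hnonneg hpartial,
    Real.tsum_le_of_sum_range_le hnonneg hpartial⟩

end DyadicDecay

theorem stmt7_general (μ : ℕ → ℝ)
    (hpos : ∀ j, 1 ≤ j → 0 < μ j)
    (hanti : ∀ j, 1 ≤ j → μ (j + 1) ≤ μ j)
    (ν : ℝ) (hν : 1 < ν) (j₀ : ℕ)
    (heigup : ∀ j, 1 ≤ j → j₀ ≤ j → μ (2 * j) ≤ (2 : ℝ) ^ (-ν) * μ j)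
    (k : ℕ) (hk : j₀ ≤ k) :
    Summable (fun i : ℕ => μ (k + 1 + i)) ∧
    ∑' i : ℕ, μ (k + 1 + i) ≤ (k + 1 : ℝ) * μ (k + 1) * (1 - (2 : ℝ) ^ (1 - ν))⁻¹ := by
  have hratio : (2 : ℝ) ^ (1 - ν) = 2 * 2 ^ (-ν) := by
    rw [sub_eq_add_neg, Real.rpow_add two_pos, Real.rpow_one]
  have hratio_lt : (2 : ℝ) ^ (1 - ν) < 1 :=
    Real.rpow_lt_one_of_one_lt_of_neg one_lt_two (by linarith)
  rw [hratio] at hratio_lt ⊢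
  exact_mod_cast summable_tail_and_tsum_tail_le_of_dyadic_decay k.succ_pos
    (antitoneOn_nat_Ici_of_succ_le hanti) (fun j hj => (hpos j (by omega)).le)
    (by positivity) hratio_lt (fun j hj => heigup j (by omega) (by omega))

/-- under (eigup) with `ν* > 1`, for every `k ≥ j₀` the tail sum
satisfies `Σ_{j=k+1}^∞ μ_j ≤ (k+1) μ_{k+1} (1 - 2^(1-ν*))⁻¹` (and in particular
the tail is summable). -/
theorem stmt7 (μ : ℕ → ℝ)
    (hpos : ∀ j, 1 ≤ j → 0 < μ j)
    (hanti : ∀ j, 1 ≤ j → μ (j + 1) ≤ μ j)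
    (hlim : Filter.Tendsto μ Filter.atTop (nhds 0))
    (ν : ℝ) (hν : 1 < ν) (j₀ : ℕ) (hj₀ : 1 ≤ j₀)
    (heigup : ∀ j, 1 ≤ j → j₀ ≤ j → μ (2 * j) ≤ (2 : ℝ) ^ (-ν) * μ j)
    (k : ℕ) (hk : j₀ ≤ k) :
    Summable (fun i : ℕ => μ (k + 1 + i)) ∧
    ∑' i : ℕ, μ (k + 1 + i) ≤ (k + 1 : ℝ) * μ (k + 1) * (1 - (2 : ℝ) ^ (1 - ν))⁻¹ :=
  stmt7_general μ hpos hanti ν hν j₀ heigup k hk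
end

section
/- Let P₁ and P₂ be the probability measures on X × ℝ given by P_i(dx, dy) := ν(dx) ⊗ N(f_i(x), σ²)(dy), i.e., P_i is the composition of ν with the Gaussian Markov kernel x ↦ N(f_i(x), σ²). Then the Kullback–Leibler divergence satisfies KL(P₁, P₂) = (1/(2σ²)) ∫_X (f₁(x) − f₂(x))² ν(dx). -/
open MeasureTheory ProbabilityTheory

/-- Kullback–Leibler divergence `KL(P, Q) = ∫ log (dP/dQ) dP`. -/
noncomputable def KL {Z : Type*} [MeasurableSpace Z] (P Q : Measure Z) : ℝ :=
  ∫ z, Real.log ((P.rnDeriv Q) z).toReal ∂P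

open Real
open scoped NNReal ENNReal

lemma integrable_id_gauss {v : ℝ≥0} (hv : v ≠ 0) :
    Integrable (fun y : ℝ => y) (gaussianReal 0 v) := by
  rw [gaussianReal_of_var_ne_zero _ hv,
    integrable_withDensity_iff (measurable_gaussianPDF _ _)
      (ae_of_all _ fun y => ENNReal.ofReal_lt_top)]
  have hb : (0:ℝ) < (2 * (v:ℝ))⁻¹ := by
    have : (0:ℝ) < (v:ℝ) := by exact_mod_cast pos_iff_ne_zero.mpr hv
    positivity
  have h := ((integrable_rpow_mul_exp_neg_mul_sq hb (s := 1) (by norm_num)).const_mul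
    ((Real.sqrt (2 * π * (v:ℝ)))⁻¹)).abs
  refine h.mono' ?_ (ae_of_all _ fun y => le_of_eq ?_)
  · exact (measurable_id.mul
      (measurable_gaussianPDF 0 v).ennreal_toReal).aestronglyMeasurable
  · rw [gaussianPDF, ENNReal.toReal_ofReal (gaussianPDFReal_nonneg _ _ _)]
    rw [gaussianPDFReal]
    rw [Real.rpow_one]
    rw [show -(y - 0)^2 / (2 * (v:ℝ)) = -(2 * (v:ℝ))⁻¹ * y^2 by ring]
    simp only [Real.norm_eq_abs, abs_mul]
    ring

lemma integral_id_gauss0 {v : ℝ≥0} (hv : v ≠ 0) :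
    ∫ y, y ∂(gaussianReal 0 v) = 0 := by
  rw [gaussianReal_of_var_ne_zero _ hv]
  have h1 : volume.withDensity (gaussianPDF 0 v)
      = volume.withDensity (fun y => ((Real.toNNReal (gaussianPDFReal 0 v y)) : ℝ≥0∞)) := rfl
  rw [h1, integral_withDensity_eq_integral_smul
    ((measurable_gaussianPDFReal 0 v).real_toNNReal) _]
  have h2 : ∀ y : ℝ, (Real.toNNReal (gaussianPDFReal 0 v y)) • y
      = gaussianPDFReal 0 v y * y := by
    intro y
    rw [NNReal.smul_def, smul_eq_mul, Real.coe_toNNReal _ (gaussianPDFReal_nonneg _ _ _)]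
  simp_rw [h2]
  have heven : ∀ y : ℝ, gaussianPDFReal 0 v (-y) = gaussianPDFReal 0 v y := by
    intro y; rw [gaussianPDFReal, gaussianPDFReal]; ring_nf
  have h3 : ∫ y : ℝ, gaussianPDFReal 0 v y * y
      = ∫ y : ℝ, gaussianPDFReal 0 v (-y) * (-y) := by
    exact (integral_neg_eq_self (fun y : ℝ => gaussianPDFReal 0 v y * y) volume).symm
  have h4 : ∫ y : ℝ, gaussianPDFReal 0 v (-y) * (-y)
      = - ∫ y : ℝ, gaussianPDFReal 0 v y * y := by
    rw [← integral_neg]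
    congr 1 with y
    rw [heven y]; ring
  linarith [h3, h4]

lemma gauss_map_zero_add {v : ℝ≥0} (m : ℝ) :
    gaussianReal m v = (gaussianReal 0 v).map (· + m) := by
  rw [gaussianReal_map_add_const, zero_add]

lemma integral_id_gauss {v : ℝ≥0} (hv : v ≠ 0) (m : ℝ) :
    ∫ y, y ∂(gaussianReal m v) = m := by
  have hmap := integral_map (μ := gaussianReal 0 v) (φ := (· + m))
    (measurable_add_const m).aemeasurable (f := fun y : ℝ => y)
    measurable_id.aestronglyMeasurable
  rw [gauss_map_zero_add m, hmap]
  rw [integral_add (integrable_id_gauss hv) (integrable_const m), integral_id_gauss0 hv,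
    integral_const]
  simp

/-- if `P_i = ν ⊗ (x ↦ N(f_i(x), σ²))` are the Gaussian regression
models, then `KL(P₁, P₂) = (1/(2σ²)) ∫ (f₁ - f₂)² dν`. -/
theorem stmt10 {X : Type*} [MeasurableSpace X] [StandardBorelSpace X]
    (ν : Measure X) [IsProbabilityMeasure ν]
    (σ : NNReal) (hσ : 0 < σ)
    (f₁ f₂ : X → ℝ) (hf₁ : Measurable f₁) (hf₂ : Measurable f₂)
    (hint : Integrable (fun x => (f₁ x - f₂ x) ^ 2) ν)
    (κ₁ κ₂ : Kernel X ℝ) [IsMarkovKernel κ₁] [IsMarkovKernel κ₂]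
    (hκ₁ : ∀ x, κ₁ x = gaussianReal (f₁ x) (σ ^ 2))
    (hκ₂ : ∀ x, κ₂ x = gaussianReal (f₂ x) (σ ^ 2)) :
    KL (ν.compProd κ₁) (ν.compProd κ₂)
      = (1 / (2 * (σ : ℝ) ^ 2)) * ∫ x, (f₁ x - f₂ x) ^ 2 ∂ν := by
  set v : ℝ≥0 := σ ^ 2 with hv_def
  have hv : v ≠ 0 := pow_ne_zero _ hσ.ne'
  have hvR : (v : ℝ) = (σ : ℝ) ^ 2 := by rw [hv_def]; push_cast; ring
  have hvpos : (0:ℝ) < (v:ℝ) := by exact_mod_cast pos_iff_ne_zero.mpr hv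
  set Δ : X × ℝ → ℝ :=
    fun z => ((z.2 - f₂ z.1) ^ 2 - (z.2 - f₁ z.1) ^ 2) / (2 * (v:ℝ)) with hΔ_def
  have hΔm : Measurable Δ := by
    apply Measurable.div_const
    exact ((measurable_snd.sub (hf₂.comp measurable_fst)).pow_const 2).sub
      ((measurable_snd.sub (hf₁.comp measurable_fst)).pow_const 2)
  set R : X × ℝ → ℝ≥0∞ := fun z => ENNReal.ofReal (rexp (Δ z)) with hR_def
  have hRm : Measurable R := (hΔm.exp).ennreal_ofReal
  -- Step A
  have stepA : ∀ x, κ₁ x = (κ₂ x).withDensity (fun y => R (x, y)) := by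
    intro x
    rw [hκ₁, hκ₂, gaussianReal_of_var_ne_zero _ hv, gaussianReal_of_var_ne_zero _ hv,
      ← withDensity_mul _ (measurable_gaussianPDF _ _)
        (show Measurable fun y => R (x, y) from hRm.comp measurable_prodMk_left)]
    congr 1
    ext y
    show gaussianPDF (f₁ x) v y
      = gaussianPDF (f₂ x) v y * ENNReal.ofReal (rexp (Δ (x, y)))
    rw [gaussianPDF, gaussianPDF, ← ENNReal.ofReal_mul (gaussianPDFReal_nonneg _ _ _)]
    congr 1
    have hΔxy : Δ (x, y) = ((y - f₂ x) ^ 2 - (y - f₁ x) ^ 2) / (2 * (v:ℝ)) := rfl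
    rw [gaussianPDFReal, gaussianPDFReal, hΔxy,
      mul_assoc ((Real.sqrt (2 * π * (v:ℝ)))⁻¹), ← Real.exp_add]
    congr 2
    ring
  -- Step B
  have stepB : ν.compProd κ₁ = (ν.compProd κ₂).withDensity R := by
    ext s hs
    rw [withDensity_apply _ hs, Measure.compProd_apply hs, ← lintegral_indicator hs,
      Measure.lintegral_compProd (hRm.indicator hs)]
    refine lintegral_congr fun x => ?_
    rw [stepA x, withDensity_apply _ (measurable_prodMk_left hs),
      ← lintegral_indicator (measurable_prodMk_left hs)]
    refine lintegral_congr fun y => ?_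
    by_cases h : (x, y) ∈ s
    · simp [Set.indicator_of_mem, h, Set.mem_preimage.mpr h]
    · have h' : y ∉ Prod.mk x ⁻¹' s := h
      simp [Set.indicator_of_notMem, h, h']
  have hac : ν.compProd κ₁ ≪ ν.compProd κ₂ := by
    rw [stepB]; exact withDensity_absolutelyContinuous _ _
  have hrn : (ν.compProd κ₁).rnDeriv (ν.compProd κ₂) =ᵐ[ν.compProd κ₂] R := by
    rw [stepB]; exact Measure.rnDeriv_withDensity _ hRm
  have hrn' : (ν.compProd κ₁).rnDeriv (ν.compProd κ₂) =ᵐ[ν.compProd κ₁] R := hac.ae_le hrn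
  -- Step D : KL = ∫ Δ
  have stepD : KL (ν.compProd κ₁) (ν.compProd κ₂) = ∫ z, Δ z ∂(ν.compProd κ₁) := by
    refine integral_congr_ae ?_
    filter_upwards [hrn'] with z hz
    rw [hz, hR_def]
    simp only
    rw [ENNReal.toReal_ofReal (Real.exp_nonneg _), Real.log_exp]
  rw [stepD]
  -- per-x facts
  set d : X → ℝ := fun x => f₁ x - f₂ x with hd_def
  have hmapκ : ∀ x, κ₁ x = (gaussianReal 0 v).map (· + f₁ x) := by
    intro x; rw [hκ₁, ← gauss_map_zero_add]
  have hcomp : ∀ x, ∀ z : ℝ, Δ (x, z + f₁ x) = (2 * d x * z + (d x) ^ 2) / (2 * (v:ℝ)) := by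
    intro x z
    simp only [hΔ_def, hd_def]
    ring
  have hInt_inner : ∀ x, Integrable (fun y => Δ (x, y)) (κ₁ x) := by
    intro x
    rw [hmapκ x, integrable_map_measure (g := fun y => Δ (x, y))
      (show Measurable fun y => Δ (x, y) from hΔm.comp measurable_prodMk_left).aestronglyMeasurable
      (measurable_add_const _).aemeasurable]
    have : (fun y => Δ (x, y)) ∘ (· + f₁ x)
        = fun z => (2 * d x * z + (d x) ^ 2) / (2 * (v:ℝ)) := by
      funext z; exact hcomp x z
    rw [this]
    exact (((integrable_id_gauss hv).const_mul _).add (integrable_const _)).div_const _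
  have hval : ∀ x, ∫ y, Δ (x, y) ∂(κ₁ x) = (d x) ^ 2 / (2 * (v:ℝ)) := by
    intro x
    rw [hmapκ x, integral_map (f := fun y => Δ (x, y)) (measurable_add_const _).aemeasurable
      (show Measurable fun y => Δ (x, y) from hΔm.comp measurable_prodMk_left).aestronglyMeasurable]
    simp_rw [hcomp x]
    rw [integral_div, integral_add ((integrable_id_gauss hv).const_mul _) (integrable_const _),
      integral_const_mul, integral_id_gauss0 hv, integral_const]
    simp
  -- integrability over compProd
  set c : ℝ := ∫ z, |z| ∂(gaussianReal 0 v) with hc_def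
  have hc0 : 0 ≤ c := integral_nonneg fun z => abs_nonneg z
  have hIntAbs : Integrable (fun z : ℝ => |z|) (gaussianReal 0 v) := (integrable_id_gauss hv).abs
  have hnorm : ∀ x, ∫ y, ‖Δ (x, y)‖ ∂(κ₁ x) ≤ (2 * |d x| * c + (d x) ^ 2) / (2 * (v:ℝ)) := by
    intro x
    rw [hmapκ x, integral_map (f := fun y => ‖Δ (x, y)‖) (measurable_add_const _).aemeasurable
      (show Measurable fun y => Δ (x, y) from
        hΔm.comp measurable_prodMk_left).norm.aestronglyMeasurable]
    simp_rw [hcomp x]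
    have hb : Integrable (fun z : ℝ => (2 * |d x| * |z| + (d x) ^ 2) / (2 * (v:ℝ)))
        (gaussianReal 0 v) :=
      ((hIntAbs.const_mul _).add (integrable_const _)).div_const _
    calc ∫ z, ‖(2 * d x * z + (d x) ^ 2) / (2 * (v:ℝ))‖ ∂(gaussianReal 0 v)
        ≤ ∫ z, (2 * |d x| * |z| + (d x) ^ 2) / (2 * (v:ℝ)) ∂(gaussianReal 0 v) := by
          have hIc : Integrable
              (fun z : ℝ => (2 * d x * z + (d x) ^ 2) / (2 * (v:ℝ))) (gaussianReal 0 v) :=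
            (((integrable_id_gauss hv).const_mul _).add (integrable_const _)).div_const _
          refine integral_mono hIc.norm hb fun z => ?_
          rw [Real.norm_eq_abs, abs_div, abs_of_pos (by positivity : (0:ℝ) < 2 * (v:ℝ))]
          refine div_le_div_of_nonneg_right ?_ (by positivity)
          calc |2 * d x * z + (d x) ^ 2| ≤ |2 * d x * z| + |(d x) ^ 2| := abs_add_le _ _
            _ = 2 * |d x| * |z| + (d x) ^ 2 := by
                rw [abs_mul, abs_mul, abs_of_nonneg (by norm_num : (0:ℝ) ≤ 2),
                  abs_sq]
      _ = (2 * |d x| * c + (d x) ^ 2) / (2 * (v:ℝ)) := by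
          rw [integral_div, integral_add (hIntAbs.const_mul _) (integrable_const _),
            integral_const_mul, integral_const]
          simp [hc_def]
  have hd1 : Integrable d ν := by
    refine Integrable.mono' ((integrable_const (1:ℝ)).add hint) (hf₁.sub hf₂).aestronglyMeasurable
      (ae_of_all _ fun x => ?_)
    simp only [hd_def, Real.norm_eq_abs, Pi.add_apply]
    nlinarith [sq_nonneg (|f₁ x - f₂ x| - 1), sq_abs (f₁ x - f₂ x), abs_nonneg (f₁ x - f₂ x)]
  have hg : Integrable (fun x => (2 * |d x| * c + (d x) ^ 2) / (2 * (v:ℝ))) ν := by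
    refine Integrable.div_const ?_ _
    have h1 : Integrable (fun x => 2 * |d x| * c) ν := by
      have := (hd1.abs.const_mul 2).mul_const c
      simpa [mul_comm, mul_assoc, mul_left_comm] using this
    exact h1.add hint
  have hIntΔ : Integrable Δ (ν.compProd κ₁) := by
    rw [Measure.integrable_compProd_iff hΔm.aestronglyMeasurable]
    refine ⟨ae_of_all _ hInt_inner, ?_⟩
    refine hg.mono' ?_ (ae_of_all _ fun x => ?_)
    · exact (hΔm.norm.stronglyMeasurable.integral_kernel_prod_right').aestronglyMeasurable
    · rw [Real.norm_eq_abs, abs_of_nonneg (integral_nonneg fun y => norm_nonneg _)]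
      exact hnorm x
  rw [Measure.integral_compProd hIntΔ]
  have : ∀ x, ∫ y, Δ (x, y) ∂(κ₁ x) = (d x) ^ 2 / (2 * (v:ℝ)) := hval
  calc ∫ x, ∫ y, Δ (x, y) ∂(κ₁ x) ∂ν = ∫ x, (d x) ^ 2 / (2 * (v:ℝ)) ∂ν :=
        integral_congr_ae (ae_of_all _ this)
    _ = (1 / (2 * (σ : ℝ) ^ 2)) * ∫ x, (f₁ x - f₂ x) ^ 2 ∂ν := by
        rw [integral_div, hvR, div_eq_mul_inv, mul_comm, one_div]
end
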